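/- On the simple module X^α_{r,r'} the Casimir elements act by scalars: C₊·v = α^{p₋}·(−1)^{r'}·(q₊^{p₋r} + q₊^{-p₋r})·v and C₋·v = α^{p₊}·(−1)^{r}·(q₋^{p₊r'} + q₋^{-p₊r'})·v for every v ∈ X^α_{r,r'}. -/

import Mathlib

noncomputable section

/-- Generators of the quantum group `g_{p₊,p₋}`. -/
inductive QGGen : Type
  | Ep | Fp | Em | Fm | K

open FreeAlgebra QGGen

/-- `q = exp(iπ/p)`. -/
def rootOfUnity (p : ℕ) : ℂ := Complex.exp (Real.pi * Complex.I / p)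

/-- The defining relations of the quantum group `g_{p₊,p₋}`. -/
inductive QGRel (pp pm : ℕ) : FreeAlgebra ℂ QGGen → FreeAlgebra ℂ QGGen → Prop
  | EpNil : QGRel pp pm (ι ℂ Ep ^ pp) 0
  | FpNil : QGRel pp pm (ι ℂ Fp ^ pp) 0
  | EmNil : QGRel pp pm (ι ℂ Em ^ pm) 0
  | FmNil : QGRel pp pm (ι ℂ Fm ^ pm) 0
  | KOrd : QGRel pp pm (ι ℂ K ^ (2 * pp * pm)) 1
  | KEp : QGRel pp pm (ι ℂ K * ι ℂ Ep)
      (algebraMap ℂ (FreeAlgebra ℂ QGGen) ((rootOfUnity pp) ^ 2) * (ι ℂ Ep * ι ℂ K))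
  | KFp : QGRel pp pm (ι ℂ K * ι ℂ Fp)
      (algebraMap ℂ (FreeAlgebra ℂ QGGen) (((rootOfUnity pp) ^ 2)⁻¹) * (ι ℂ Fp * ι ℂ K))
  | KEm : QGRel pp pm (ι ℂ K * ι ℂ Em)
      (algebraMap ℂ (FreeAlgebra ℂ QGGen) ((rootOfUnity pm) ^ 2) * (ι ℂ Em * ι ℂ K))
  | KFm : QGRel pp pm (ι ℂ K * ι ℂ Fm)
      (algebraMap ℂ (FreeAlgebra ℂ QGGen) (((rootOfUnity pm) ^ 2)⁻¹) * (ι ℂ Fm * ι ℂ K))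
  | EpEm : QGRel pp pm (ι ℂ Ep * ι ℂ Em) (ι ℂ Em * ι ℂ Ep)
  | FpFm : QGRel pp pm (ι ℂ Fp * ι ℂ Fm) (ι ℂ Fm * ι ℂ Fp)
  | EpFm : QGRel pp pm (ι ℂ Ep * ι ℂ Fm) (ι ℂ Fm * ι ℂ Ep)
  | EmFp : QGRel pp pm (ι ℂ Em * ι ℂ Fp) (ι ℂ Fp * ι ℂ Em)
  | EpFp : QGRel pp pm (ι ℂ Ep * ι ℂ Fp - ι ℂ Fp * ι ℂ Ep)
      (algebraMap ℂ (FreeAlgebra ℂ QGGen)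
          (((rootOfUnity pp) ^ pm - ((rootOfUnity pp) ^ pm)⁻¹)⁻¹) *
        (ι ℂ K ^ pm - ι ℂ K ^ (2 * pp * pm - pm)))
  | EmFm : QGRel pp pm (ι ℂ Em * ι ℂ Fm - ι ℂ Fm * ι ℂ Em)
      (algebraMap ℂ (FreeAlgebra ℂ QGGen)
          (((rootOfUnity pm) ^ pp - ((rootOfUnity pm) ^ pp)⁻¹)⁻¹) *
        (ι ℂ K ^ pp - ι ℂ K ^ (2 * pp * pm - pp)))

/-- The quantum group `g_{p₊,p₋}`. -/
abbrev QG (pp pm : ℕ) : Type := RingQuot (QGRel pp pm)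

/-- The image of a generator in `g_{p₊,p₋}`. -/
def gen (pp pm : ℕ) (x : QGGen) : QG pp pm :=
  RingQuot.mkAlgHom ℂ (QGRel pp pm) (ι ℂ x)

/-- The quantum integer `[m]₊`. -/
def qintP (pp pm : ℕ) (m : ℤ) : ℂ :=
  (rootOfUnity pp ^ ((pm : ℤ) * m) - rootOfUnity pp ^ (-((pm : ℤ) * m))) /
    (rootOfUnity pp ^ (pm : ℤ) - rootOfUnity pp ^ (-(pm : ℤ)))

/-- The quantum integer `[m]₋`. -/
def qintM (pp pm : ℕ) (m : ℤ) : ℂ :=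
  (rootOfUnity pm ^ ((pp : ℤ) * m) - rootOfUnity pm ^ (-((pp : ℤ) * m))) /
    (rootOfUnity pm ^ (pp : ℤ) - rootOfUnity pm ^ (-(pp : ℤ)))

/-- The underlying vector space of the module `X^α_{r,r'}`, with basis `a_{n,n'}`. -/
abbrev Vrep (r r' : ℕ) : Type := Fin r × Fin r' → ℂ

/-- The action of `K` on `X^α_{r,r'}`. -/
def Kop (pp pm : ℕ) (α : ℂ) (r r' : ℕ) : Vrep r r' →ₗ[ℂ] Vrep r r' where
  toFun v := fun nn =>
    α * rootOfUnity pp ^ ((r : ℤ) - 1 - 2 * (nn.1 : ℕ)) *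
      rootOfUnity pm ^ ((r' : ℤ) - 1 - 2 * (nn.2 : ℕ)) * v nn
  map_add' x y := by funext nn; simp [mul_add]
  map_smul' c x := by funext nn; simp [Pi.smul_apply, smul_eq_mul]; ring

/-- The action of `E₊` on `X^α_{r,r'}` : `E₊·a_{n,n'} = α^{p₋}(−1)^{r'−1}[n]₊[r−n]₊ a_{n−1,n'}`. -/
def EopP (pp pm : ℕ) (α : ℂ) (r r' : ℕ) : Vrep r r' →ₗ[ℂ] Vrep r r' where
  toFun v := fun nn =>
    α ^ pm * (-1 : ℂ) ^ (r' - 1) *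
      (if h : (nn.1 : ℕ) + 1 < r then
        qintP pp pm ((nn.1 : ℕ) + 1) * qintP pp pm ((r : ℤ) - ((nn.1 : ℕ) + 1)) *
          v (⟨(nn.1 : ℕ) + 1, h⟩, nn.2)
      else 0)
  map_add' x y := by
    funext nn
    simp only [Pi.add_apply]
    split_ifs with h <;> ring
  map_smul' c x := by
    funext nn
    simp only [Pi.smul_apply, smul_eq_mul, RingHom.id_apply]
    split_ifs with h <;> ring

/-- The action of `E₋` on `X^α_{r,r'}` : `E₋·a_{n,n'} = α^{p₊}(−1)^{r−1}[n']₋[r'−n']₋ a_{n,n'−1}`. -/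
def EopM (pp pm : ℕ) (α : ℂ) (r r' : ℕ) : Vrep r r' →ₗ[ℂ] Vrep r r' where
  toFun v := fun nn =>
    α ^ pp * (-1 : ℂ) ^ (r - 1) *
      (if h : (nn.2 : ℕ) + 1 < r' then
        qintM pp pm ((nn.2 : ℕ) + 1) * qintM pp pm ((r' : ℤ) - ((nn.2 : ℕ) + 1)) *
          v (nn.1, ⟨(nn.2 : ℕ) + 1, h⟩)
      else 0)
  map_add' x y := by
    funext nn
    simp only [Pi.add_apply]
    split_ifs with h <;> ring
  map_smul' c x := by
    funext nn
    simp only [Pi.smul_apply, smul_eq_mul, RingHom.id_apply]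
    split_ifs with h <;> ring

/-- The action of `F₊` on `X^α_{r,r'}` : `F₊·a_{n,n'} = a_{n+1,n'}`. -/
def FopP (r r' : ℕ) : Vrep r r' →ₗ[ℂ] Vrep r r' where
  toFun v := fun nn =>
    if 0 < (nn.1 : ℕ) then
      v (⟨(nn.1 : ℕ) - 1, Nat.lt_of_le_of_lt (Nat.sub_le _ 1) nn.1.isLt⟩, nn.2)
    else 0
  map_add' x y := by
    funext nn
    simp only [Pi.add_apply]
    split_ifs with h <;> ring
  map_smul' c x := by
    funext nn
    simp only [Pi.smul_apply, smul_eq_mul, RingHom.id_apply]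
    split_ifs with h <;> ring

/-- The action of `F₋` on `X^α_{r,r'}` : `F₋·a_{n,n'} = a_{n,n'+1}`. -/
def FopM (r r' : ℕ) : Vrep r r' →ₗ[ℂ] Vrep r r' where
  toFun v := fun nn =>
    if 0 < (nn.2 : ℕ) then
      v (nn.1, ⟨(nn.2 : ℕ) - 1, Nat.lt_of_le_of_lt (Nat.sub_le _ 1) nn.2.isLt⟩)
    else 0
  map_add' x y := by
    funext nn
    simp only [Pi.add_apply]
    split_ifs with h <;> ring
  map_smul' c x := by
    funext nn
    simp only [Pi.smul_apply, smul_eq_mul, RingHom.id_apply]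
    split_ifs with h <;> ring

/-- `ρ` is the standard representation of `g_{p₊,p₋}` on `X^α_{r,r'}`. -/
def IsStdRep (pp pm : ℕ) (α : ℂ) (r r' : ℕ)
    (ρ : QG pp pm →ₐ[ℂ] Module.End ℂ (Vrep r r')) : Prop :=
  ρ (gen pp pm K) = Kop pp pm α r r' ∧
  ρ (gen pp pm Ep) = EopP pp pm α r r' ∧
  ρ (gen pp pm Em) = EopM pp pm α r r' ∧
  ρ (gen pp pm Fp) = FopP r r' ∧
  ρ (gen pp pm Fm) = FopM r r'

/-- The Casimir element `C₊` of `g_{p₊,p₋}`. -/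
def CasP (pp pm : ℕ) : QG pp pm :=
  -(algebraMap ℂ (QG pp pm) (rootOfUnity pp ^ pm) * gen pp pm K ^ (2 * pp * pm - pm)) -
    algebraMap ℂ (QG pp pm) ((rootOfUnity pp ^ pm)⁻¹) * gen pp pm K ^ pm -
    algebraMap ℂ (QG pp pm) ((rootOfUnity pp ^ pm - (rootOfUnity pp ^ pm)⁻¹) ^ 2) *
      (gen pp pm Ep * gen pp pm Fp)

/-- The Casimir element `C₋` of `g_{p₊,p₋}`. -/
def CasM (pp pm : ℕ) : QG pp pm :=
  -(algebraMap ℂ (QG pp pm) (rootOfUnity pm ^ pp) * gen pp pm K ^ (2 * pp * pm - pp)) -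
    algebraMap ℂ (QG pp pm) ((rootOfUnity pm ^ pp)⁻¹) * gen pp pm K ^ pp -
    algebraMap ℂ (QG pp pm) ((rootOfUnity pm ^ pp - (rootOfUnity pm ^ pp)⁻¹) ^ 2) *
      (gen pp pm Em * gen pp pm Fm)


section Helpers

lemma root_ne (p : ℕ) : rootOfUnity p ≠ 0 := Complex.exp_ne_zero _

lemma root_pow_self {p : ℕ} (hp : p ≠ 0) : rootOfUnity p ^ p = -1 := by
  rw [rootOfUnity, ← Complex.exp_nat_mul]
  have : (p : ℂ) ≠ 0 := Nat.cast_ne_zero.mpr hp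
  rw [show (p : ℂ) * (Real.pi * Complex.I / p) = Real.pi * Complex.I by field_simp]
  exact Complex.exp_pi_mul_I

lemma root_pow_two {p : ℕ} (hp : p ≠ 0) : rootOfUnity p ^ (2 * p) = 1 := by
  rw [mul_comm, pow_mul, root_pow_self hp]; norm_num

lemma Q_sub_inv_ne {pp pm : ℕ} (hpp : 2 ≤ pp) (hco : Nat.Coprime pp pm) :
    (rootOfUnity pp ^ pm : ℂ) - (rootOfUnity pp ^ pm)⁻¹ ≠ 0 := by
  intro h
  have hQ0 : (rootOfUnity pp ^ pm : ℂ) ≠ 0 := pow_ne_zero _ (root_ne pp)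
  have hsq : (rootOfUnity pp ^ pm : ℂ) ^ 2 = 1 := by
    have := sub_eq_zero.mp h
    field_simp at this
    linear_combination this
  have hx : Complex.exp ((2 * pm : ℕ) * (Real.pi * Complex.I / pp)) = 1 := by
    rw [Complex.exp_nat_mul]
    calc Complex.exp (Real.pi * Complex.I / pp) ^ (2 * pm)
        = (Complex.exp (Real.pi * Complex.I / pp) ^ pm) ^ 2 := by
          rw [← pow_mul, mul_comm 2 pm]
      _ = 1 := hsq
  rw [Complex.exp_eq_one_iff] at hx
  obtain ⟨k, hk⟩ := hx
  have hp0 : (pp : ℂ) ≠ 0 := Nat.cast_ne_zero.mpr (by omega)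
  have hπ : (Real.pi : ℂ) ≠ 0 := by exact_mod_cast Real.pi_ne_zero
  have hkey : (pm : ℂ) = k * pp := by
    field_simp at hk
    have hI := Complex.I_ne_zero
    push_cast at hk
    have h2 : (2 : ℂ) ≠ 0 := two_ne_zero
    apply mul_left_cancel₀ h2
    apply mul_left_cancel₀ hπ
    apply mul_left_cancel₀ hI
    linear_combination (Complex.I * (Real.pi : ℂ)) * hk
  have hdvd : (pp : ℤ) ∣ (pm : ℤ) := ⟨k, by exact_mod_cast hkey.trans (mul_comm _ _)⟩
  have : pp ∣ pm := Int.ofNat_dvd.mp (by exact_mod_cast hdvd)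
  have := Nat.eq_one_of_dvd_coprimes hco dvd_rfl this
  omega

lemma key (Q : ℂ) (hQ0 : Q ≠ 0) (hd : Q - Q⁻¹ ≠ 0) (r n : ℕ) (hn : n < r) :
    -(Q * (Q ^ ((r:ℤ) - 1 - 2 * (n:ℤ)))⁻¹) - Q⁻¹ * Q ^ ((r:ℤ) - 1 - 2 * (n:ℤ)) -
      (Q - Q⁻¹) ^ 2 *
        (if n + 1 < r then
          ((Q ^ ((n:ℤ) + 1) - (Q ^ ((n:ℤ) + 1))⁻¹) / (Q - Q⁻¹)) *
            ((Q ^ ((r:ℤ) - ((n:ℤ) + 1)) - (Q ^ ((r:ℤ) - ((n:ℤ) + 1)))⁻¹) / (Q - Q⁻¹))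
        else 0) = -(Q ^ r + (Q ^ r)⁻¹) := by
  have hx : Q ^ ((n:ℤ) + 1) ≠ 0 := zpow_ne_zero _ hQ0
  have hy : Q ^ ((r:ℤ)) ≠ 0 := zpow_ne_zero _ hQ0
  have hr : (Q : ℂ) ^ r = Q ^ ((r:ℤ)) := (zpow_natCast Q r).symm
  set x := Q ^ ((n:ℤ) + 1) with hxdef
  set y := Q ^ ((r:ℤ)) with hydef
  have h1 : Q ^ ((r:ℤ) - 1 - 2 * (n:ℤ)) = y * x⁻¹ * x⁻¹ * Q := by
    rw [show (r:ℤ) - 1 - 2 * (n:ℤ) = (r:ℤ) + -((n:ℤ)+1) + -((n:ℤ)+1) + 1 by ring,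
      zpow_add₀ hQ0, zpow_add₀ hQ0, zpow_add₀ hQ0, zpow_neg, zpow_one, hxdef, hydef]
  have h2 : Q ^ ((r:ℤ) - ((n:ℤ) + 1)) = y * x⁻¹ := by
    rw [show (r:ℤ) - ((n:ℤ)+1) = (r:ℤ) + -((n:ℤ)+1) by ring, zpow_add₀ hQ0, zpow_neg,
      hxdef, hydef]
  rw [hr, h1, h2]
  set D := Q - Q⁻¹ with hDdef
  split_ifs with h
  · have hstep : D ^ 2 *
        (((x - x⁻¹) / D) * ((y * x⁻¹ - (y * x⁻¹)⁻¹) / D))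
        = (x - x⁻¹) * (y * x⁻¹ - (y * x⁻¹)⁻¹) := by
      field_simp
    rw [hstep]
    field_simp
    ring
  · have hrn : r = n + 1 := by omega
    have hyx : y = x := by rw [hxdef, hydef, hrn]; push_cast; ring_nf
    rw [hyx]
    field_simp
    ring

lemma zpow_npow (q : ℂ) (a : ℤ) (p : ℕ) : (q ^ a) ^ p = (q ^ p) ^ a := by
  rw [← zpow_natCast (q ^ a) p, ← zpow_mul, mul_comm, zpow_mul, zpow_natCast]

lemma neg_one_zpow' (r2 n2 : ℕ) (hr2 : 1 ≤ r2) :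
    ((-1 : ℂ)) ^ ((r2:ℤ) - 1 - 2 * (n2:ℤ)) = (-1 : ℂ) ^ (r2 - 1) := by
  rw [show (r2:ℤ) - 1 - 2 * (n2:ℤ) = ((r2 - 1 : ℕ) : ℤ) - ((2 * n2 : ℕ) : ℤ) by
    push_cast; omega]
  rw [zpow_sub₀ (by norm_num : (-1:ℂ) ≠ 0), zpow_natCast, zpow_natCast, pow_mul]
  norm_num

lemma lam_pow (p1 p2 : ℕ) (hp2 : p2 ≠ 0) (α : ℂ) (r1 r2 n1 n2 : ℕ) (hr2 : 1 ≤ r2) :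
    (α * rootOfUnity p1 ^ ((r1:ℤ) - 1 - 2 * (n1:ℤ)) *
        rootOfUnity p2 ^ ((r2:ℤ) - 1 - 2 * (n2:ℤ))) ^ p2
      = (α ^ p2 * (-1 : ℂ) ^ (r2 - 1)) *
          (rootOfUnity p1 ^ p2 : ℂ) ^ ((r1:ℤ) - 1 - 2 * (n1:ℤ)) := by
  rw [mul_pow, mul_pow, zpow_npow, zpow_npow, root_pow_self hp2, neg_one_zpow' r2 n2 hr2]
  ring

lemma lam_big (p1 p2 : ℕ) (h1 : p1 ≠ 0) (h2 : p2 ≠ 0) (α : ℂ) (hα : α = 1 ∨ α = -1)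
    (a b : ℤ) :
    (α * rootOfUnity p1 ^ a * rootOfUnity p2 ^ b) ^ (2 * p1 * p2) = 1 := by
  have hα2 : α ^ 2 = 1 := by rcases hα with h | h <;> simp [h]
  have hA : α ^ (2 * p1 * p2) = 1 := by
    rw [show 2 * p1 * p2 = 2 * (p1 * p2) by ring, pow_mul, hα2, one_pow]
  have hB : (rootOfUnity p1 ^ a) ^ (2 * p1 * p2) = 1 := by
    rw [zpow_npow, show 2 * p1 * p2 = 2 * p1 * p2 by ring, pow_mul, root_pow_two h1,
      one_pow, one_zpow]
  have hC : (rootOfUnity p2 ^ b) ^ (2 * p1 * p2) = 1 := by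
    rw [zpow_npow, show 2 * p1 * p2 = 2 * p2 * p1 by ring, pow_mul, root_pow_two h2,
      one_pow, one_zpow]
  rw [mul_pow, mul_pow, hA, hB, hC]
  norm_num

lemma qintP_eq (pp pm : ℕ) (m : ℤ) :
    qintP pp pm m = ((rootOfUnity pp ^ pm : ℂ) ^ m - ((rootOfUnity pp ^ pm : ℂ) ^ m)⁻¹) /
      ((rootOfUnity pp ^ pm : ℂ) - (rootOfUnity pp ^ pm : ℂ)⁻¹) := by
  unfold qintP
  rw [zpow_neg, zpow_neg, zpow_mul, zpow_natCast]

lemma qintM_eq (pp pm : ℕ) (m : ℤ) :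
    qintM pp pm m = ((rootOfUnity pm ^ pp : ℂ) ^ m - ((rootOfUnity pm ^ pp : ℂ) ^ m)⁻¹) /
      ((rootOfUnity pm ^ pp : ℂ) - (rootOfUnity pm ^ pp : ℂ)⁻¹) := by
  unfold qintM
  rw [zpow_neg, zpow_neg, zpow_mul, zpow_natCast]

lemma Kop_pow (pp pm : ℕ) (α : ℂ) (r r' : ℕ) (m : ℕ) (v : Vrep r r') (nn : Fin r × Fin r') :
    ((Kop pp pm α r r') ^ m) v nn =
      (α * rootOfUnity pp ^ ((r : ℤ) - 1 - 2 * ((nn.1 : ℕ) : ℤ)) *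
        rootOfUnity pm ^ ((r' : ℤ) - 1 - 2 * ((nn.2 : ℕ) : ℤ))) ^ m * v nn := by
  induction m generalizing v with
  | zero => simp
  | succ m ih =>
    rw [pow_succ, Module.End.mul_apply, ih]
    simp only [Kop, LinearMap.coe_mk, AddHom.coe_mk]
    ring

lemma EFP_apply (pp pm : ℕ) (α : ℂ) (r r' : ℕ) (v : Vrep r r') (nn : Fin r × Fin r') :
    (EopP pp pm α r r') ((FopP r r') v) nn =
      α ^ pm * (-1 : ℂ) ^ (r' - 1) *
        (if (nn.1 : ℕ) + 1 < r then
          qintP pp pm ((nn.1 : ℕ) + 1) * qintP pp pm ((r : ℤ) - ((nn.1 : ℕ) + 1)) * v nn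
        else 0) := by
  by_cases h : (nn.1 : ℕ) + 1 < r
  · simp only [EopP, FopP, LinearMap.coe_mk, AddHom.coe_mk, dif_pos h, if_pos h]
    simp
  · simp [EopP, FopP, h]

lemma EFM_apply (pp pm : ℕ) (α : ℂ) (r r' : ℕ) (v : Vrep r r') (nn : Fin r × Fin r') :
    (EopM pp pm α r r') ((FopM r r') v) nn =
      α ^ pp * (-1 : ℂ) ^ (r - 1) *
        (if (nn.2 : ℕ) + 1 < r' then
          qintM pp pm ((nn.2 : ℕ) + 1) * qintM pp pm ((r' : ℤ) - ((nn.2 : ℕ) + 1)) * v nn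
        else 0) := by
  by_cases h : (nn.2 : ℕ) + 1 < r'
  · simp only [EopM, FopM, LinearMap.coe_mk, AddHom.coe_mk, dif_pos h, if_pos h]
    simp
  · simp [EopM, FopM, h]

end Helpers

/-- On the simple module `X^α_{r,r'}` the Casimir elements act by the indicated scalars. -/
theorem casimir_scalar_action (pp pm : ℕ) (hpp : 2 ≤ pp) (hpm : 2 ≤ pm)
    (hco : Nat.Coprime pp pm) (α : ℂ) (hα : α = 1 ∨ α = -1)
    (r r' : ℕ) (hr1 : 1 ≤ r) (hr2 : r ≤ pp) (hr'1 : 1 ≤ r') (hr'2 : r' ≤ pm)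
    (ρ : QG pp pm →ₐ[ℂ] Module.End ℂ (Vrep r r')) (hρ : IsStdRep pp pm α r r' ρ) :
    ∀ v : Vrep r r',
      ρ (CasP pp pm) v =
        (α ^ pm * (-1 : ℂ) ^ r' * (rootOfUnity pp ^ (pm * r) + (rootOfUnity pp ^ (pm * r))⁻¹)) • v ∧
      ρ (CasM pp pm) v =
        (α ^ pp * (-1 : ℂ) ^ r * (rootOfUnity pm ^ (pp * r') + (rootOfUnity pm ^ (pp * r'))⁻¹)) • v := by
  obtain ⟨hK, hEp, hEm, hFp, hFm⟩ := hρ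
  have hpp0 : pp ≠ 0 := by omega
  have hpm0 : pm ≠ 0 := by omega
  intro v
  constructor
  · have hQ0 : (rootOfUnity pp ^ pm : ℂ) ≠ 0 := pow_ne_zero _ (root_ne pp)
    have hD : (rootOfUnity pp ^ pm : ℂ) - (rootOfUnity pp ^ pm)⁻¹ ≠ 0 := Q_sub_inv_ne hpp hco
    funext nn
    simp only [CasP, map_sub, map_neg, map_mul, AlgHom.commutes]
    rw [map_pow ρ (gen pp pm K) (2 * pp * pm - pm), map_pow ρ (gen pp pm K) pm,
      hK, hEp, hFp]
    simp only [LinearMap.sub_apply, LinearMap.neg_apply, Module.End.mul_apply,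
      Module.algebraMap_end_apply, Pi.sub_apply, Pi.neg_apply, Pi.smul_apply, smul_eq_mul]
    rw [Kop_pow, Kop_pow, EFP_apply]
    set Q := (rootOfUnity pp ^ pm : ℂ) with hQdef
    set lam := α * rootOfUnity pp ^ ((r:ℤ) - 1 - 2 * ((nn.1:ℕ):ℤ)) *
      rootOfUnity pm ^ ((r':ℤ) - 1 - 2 * ((nn.2:ℕ):ℤ)) with hlam
    have hpmpow : lam ^ pm = (α ^ pm * (-1:ℂ) ^ (r' - 1)) *
        Q ^ ((r:ℤ) - 1 - 2 * ((nn.1:ℕ):ℤ)) :=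
      lam_pow pp pm hpm0 α r r' nn.1 nn.2 hr'1
    have hbig : lam ^ (2 * pp * pm) = 1 := lam_big pp pm hpp0 hpm0 α hα _ _
    have hone : α * α = 1 := by rcases hα with h | h <;> rw [h] <;> norm_num
    have hε : (α ^ pm * (-1:ℂ) ^ (r' - 1)) * (α ^ pm * (-1:ℂ) ^ (r' - 1)) = 1 := by
      calc (α ^ pm * (-1:ℂ) ^ (r' - 1)) * (α ^ pm * (-1:ℂ) ^ (r' - 1))
          = (α * α) ^ pm * ((-1:ℂ) * (-1)) ^ (r' - 1) := by
            rw [mul_pow, mul_pow]; ring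
        _ = 1 := by rw [hone]; norm_num
    have hNm : lam ^ (2 * pp * pm - pm) = (lam ^ pm)⁻¹ :=
      eq_inv_of_mul_eq_one_left (by
        rw [← pow_add, Nat.sub_add_cancel (Nat.le_mul_of_pos_left pm (by omega))]
        exact hbig)
    have hinv : (lam ^ pm)⁻¹ = (α ^ pm * (-1:ℂ) ^ (r' - 1)) *
        (Q ^ ((r:ℤ) - 1 - 2 * ((nn.1:ℕ):ℤ)))⁻¹ := by
      rw [hpmpow, mul_inv, inv_eq_of_mul_eq_one_right hε]
    have hQr : rootOfUnity pp ^ (pm * r) = Q ^ r := by rw [hQdef, pow_mul]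
    have hsign : (-1:ℂ) ^ r' = -(-1:ℂ) ^ (r' - 1) := by
      obtain ⟨k, hk⟩ : ∃ k, r' = k + 1 := ⟨r' - 1, by omega⟩
      rw [hk]; simp [pow_succ]
    have hif : (if (nn.1:ℕ) + 1 < r then
          qintP pp pm ((nn.1:ℕ) + 1) * qintP pp pm ((r:ℤ) - ((nn.1:ℕ) + 1)) * v nn
        else 0) =
        (if (nn.1:ℕ) + 1 < r then
          ((Q ^ (((nn.1:ℕ):ℤ) + 1) - (Q ^ (((nn.1:ℕ):ℤ) + 1))⁻¹) / (Q - Q⁻¹)) *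
            ((Q ^ ((r:ℤ) - (((nn.1:ℕ):ℤ) + 1)) -
              (Q ^ ((r:ℤ) - (((nn.1:ℕ):ℤ) + 1)))⁻¹) / (Q - Q⁻¹))
        else 0) * v nn := by
      split_ifs with h
      · rw [qintP_eq, qintP_eq]
      · ring
    have hkey := key Q hQ0 hD r nn.1 nn.1.isLt
    rw [hNm, hinv, hpmpow, hif, hQr, hsign]
    linear_combination ((α ^ pm * (-1:ℂ) ^ (r' - 1)) * v nn) * hkey
  · have hQ0 : (rootOfUnity pm ^ pp : ℂ) ≠ 0 := pow_ne_zero _ (root_ne pm)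
    have hD : (rootOfUnity pm ^ pp : ℂ) - (rootOfUnity pm ^ pp)⁻¹ ≠ 0 :=
      Q_sub_inv_ne hpm hco.symm
    funext nn
    simp only [CasM, map_sub, map_neg, map_mul, AlgHom.commutes]
    rw [map_pow ρ (gen pp pm K) (2 * pp * pm - pp), map_pow ρ (gen pp pm K) pp,
      hK, hEm, hFm]
    simp only [LinearMap.sub_apply, LinearMap.neg_apply, Module.End.mul_apply,
      Module.algebraMap_end_apply, Pi.sub_apply, Pi.neg_apply, Pi.smul_apply, smul_eq_mul]
    rw [Kop_pow, Kop_pow, EFM_apply]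
    set Q := (rootOfUnity pm ^ pp : ℂ) with hQdef
    set lam := α * rootOfUnity pp ^ ((r:ℤ) - 1 - 2 * ((nn.1:ℕ):ℤ)) *
      rootOfUnity pm ^ ((r':ℤ) - 1 - 2 * ((nn.2:ℕ):ℤ)) with hlam
    have hcomm : lam = α * rootOfUnity pm ^ ((r':ℤ) - 1 - 2 * ((nn.2:ℕ):ℤ)) *
        rootOfUnity pp ^ ((r:ℤ) - 1 - 2 * ((nn.1:ℕ):ℤ)) := by rw [hlam]; ring
    have hpppow : lam ^ pp = (α ^ pp * (-1:ℂ) ^ (r - 1)) *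
        Q ^ ((r':ℤ) - 1 - 2 * ((nn.2:ℕ):ℤ)) := by
      rw [hcomm]; exact lam_pow pm pp hpp0 α r' r nn.2 nn.1 hr1
    have hbig : lam ^ (2 * pp * pm) = 1 := by
      rw [hcomm, show 2 * pp * pm = 2 * pm * pp by ring]
      exact lam_big pm pp hpm0 hpp0 α hα _ _
    have hone : α * α = 1 := by rcases hα with h | h <;> rw [h] <;> norm_num
    have hε : (α ^ pp * (-1:ℂ) ^ (r - 1)) * (α ^ pp * (-1:ℂ) ^ (r - 1)) = 1 := by
      calc (α ^ pp * (-1:ℂ) ^ (r - 1)) * (α ^ pp * (-1:ℂ) ^ (r - 1))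
          = (α * α) ^ pp * ((-1:ℂ) * (-1)) ^ (r - 1) := by
            rw [mul_pow, mul_pow]; ring
        _ = 1 := by rw [hone]; norm_num
    have hNm : lam ^ (2 * pp * pm - pp) = (lam ^ pp)⁻¹ :=
      eq_inv_of_mul_eq_one_left (by
        rw [← pow_add, Nat.sub_add_cancel (by nlinarith : pp ≤ 2 * pp * pm)]
        exact hbig)
    have hinv : (lam ^ pp)⁻¹ = (α ^ pp * (-1:ℂ) ^ (r - 1)) *
        (Q ^ ((r':ℤ) - 1 - 2 * ((nn.2:ℕ):ℤ)))⁻¹ := by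
      rw [hpppow, mul_inv, inv_eq_of_mul_eq_one_right hε]
    have hQr : rootOfUnity pm ^ (pp * r') = Q ^ r' := by rw [hQdef, pow_mul]
    have hsign : (-1:ℂ) ^ r = -(-1:ℂ) ^ (r - 1) := by
      obtain ⟨k, hk⟩ : ∃ k, r = k + 1 := ⟨r - 1, by omega⟩
      rw [hk]; simp [pow_succ]
    have hif : (if (nn.2:ℕ) + 1 < r' then
          qintM pp pm ((nn.2:ℕ) + 1) * qintM pp pm ((r':ℤ) - ((nn.2:ℕ) + 1)) * v nn
        else 0) =
        (if (nn.2:ℕ) + 1 < r' then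
          ((Q ^ (((nn.2:ℕ):ℤ) + 1) - (Q ^ (((nn.2:ℕ):ℤ) + 1))⁻¹) / (Q - Q⁻¹)) *
            ((Q ^ ((r':ℤ) - (((nn.2:ℕ):ℤ) + 1)) -
              (Q ^ ((r':ℤ) - (((nn.2:ℕ):ℤ) + 1)))⁻¹) / (Q - Q⁻¹))
        else 0) * v nn := by
      split_ifs with h
      · rw [qintM_eq, qintM_eq]
      · ring
    have hkey := key Q hQ0 hD r' nn.2 nn.2.isLt
    rw [hNm, hinv, hpppow, hif, hQr, hsign]
    linear_combination ((α ^ pp * (-1:ℂ) ^ (r - 1)) * v nn) * hkey
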